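/- arXiv:2410.02495 — 2 statements merged into one kernel-verified Lean document; each statement's English description precedes it below -/
import Mathlib

section
/- Let B be a Young function with right-continuous derivative b, let 1 < r < s ≤ ∞, and set p = r/(r−1) and q = s/(s−1) (so q = 1 when s = ∞). Then ∫₀^∞ (t^{p−1} / b^{-1}(t))^{q/(p−q)} dt/t < ∞ if and only if ∫₀^∞ (B(t)/t^r)^{s/(s−r)} dt/t < ∞, where b^{-1} is the left-continuous inverse of b and the exponent s/(s−r) is interpreted as 1 when s = ∞. -/
open MeasureTheory Filter Set ENNReal

noncomputable section

/-- A Young function: a convex, non-decreasing, left-continuous function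
`A : [0,∞] → [0,∞]` with `A(0) = 0`, `A(0+) = 0` and `A(∞) = ∞`. -/
structure YoungFunction where
  toFun : ℝ≥0∞ → ℝ≥0∞
  map_zero : toFun 0 = 0
  tendsto_zero : Filter.Tendsto toFun (nhdsWithin 0 (Set.Ioi 0)) (nhds 0)
  mono : Monotone toFun
  convex' : ∀ s t c : ℝ≥0∞, c ≤ 1 →
    toFun (c * s + (1 - c) * t) ≤ c * toFun s + (1 - c) * toFun t
  left_continuous : ∀ t : ℝ≥0∞, 0 < t → toFun t = ⨆ s ∈ Set.Iio t, toFun s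
  map_top : toFun ⊤ = ⊤

/-- Left-continuous inverse of a non-decreasing function `F : [0,∞] → [0,∞]`:
`F⁻¹(t) = inf {τ ≥ 0 : F(τ) ≥ t}`. -/
def leftInvE (F : ℝ≥0∞ → ℝ≥0∞) (t : ℝ≥0∞) : ℝ≥0∞ :=
  sInf {τ : ℝ≥0∞ | t ≤ F τ}

/-- `a` is the right-continuous derivative of the Young function `A`:
`a` is non-decreasing, right-continuous, `a(∞) = ∞`, and
`A(t) = ∫₀ᵗ a(s) ds` for all finite `t ≥ 0`. -/
def IsYoungDerivative (A : YoungFunction) (a : ℝ≥0∞ → ℝ≥0∞) : Prop :=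
  Monotone a ∧ a ⊤ = ⊤ ∧
    (∀ t : ℝ≥0∞, t ≠ ⊤ → Filter.Tendsto a (nhdsWithin t (Set.Ioi t)) (nhds (a t))) ∧
    ∀ t : ℝ, 0 ≤ t →
      A.toFun (ENNReal.ofReal t) = ∫⁻ s in Set.Ioc (0:ℝ) t, a (ENNReal.ofReal s)

/-- The Young conjugate `B̃(t) = sup {s·t − B(s) : s ∈ [0,∞]}`. -/
def youngConj (A : YoungFunction) (t : ℝ≥0∞) : ℝ≥0∞ :=
  ⨆ s : ℝ≥0∞, s * t - A.toFun s

variable {R : Type*} [MeasurableSpace R]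

/-- The distribution function `f₊(λ) = μ({x : |f(x)| > λ})`. -/
def distFn (μ : Measure R) (f : R → ℝ) (lam : ℝ≥0∞) : ℝ≥0∞ :=
  μ {x | lam < ENNReal.ofReal |f x|}

/-- The non-increasing rearrangement `f*(t) = inf {λ ≥ 0 : f₊(λ) ≤ t}`. -/
def rearr (μ : Measure R) (f : R → ℝ) (t : ℝ≥0∞) : ℝ≥0∞ :=
  sInf {lam : ℝ≥0∞ | distFn μ f lam ≤ t}

/-- The Lorentz functional `‖f‖_{p,q}` for `p, q ∈ (0,∞]`. -/
def lorentzNorm (μ : Measure R) (p q : ℝ≥0∞) (f : R → ℝ) : ℝ≥0∞ :=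
  if q = ⊤ then
    ⨆ t : Set.Ioi (0:ℝ), ENNReal.ofReal t.1 ^ (p⁻¹).toReal * rearr μ f (ENNReal.ofReal t.1)
  else
    (∫⁻ t in Set.Ioi (0:ℝ),
        (ENNReal.ofReal t ^ (p⁻¹).toReal * rearr μ f (ENNReal.ofReal t)) ^ q.toReal
          / ENNReal.ofReal t) ^ (q⁻¹).toReal

/-- The Luxemburg norm `‖f‖_A = inf {λ > 0 : ∫ A(|f|/λ) dμ ≤ 1}`. -/
def luxNorm (μ : Measure R) (A : YoungFunction) (f : R → ℝ) : ℝ≥0∞ :=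
  sInf {lam : ℝ≥0∞ | 0 < lam ∧ ∫⁻ x, A.toFun (ENNReal.ofReal |f x| / lam) ∂μ ≤ 1}

/-- The measure `μ` is non-atomic: every set of positive measure has a subset
of strictly smaller positive measure. -/
def NonAtomic (μ : Measure R) : Prop :=
  ∀ s : Set R, MeasurableSet s → 0 < μ s →
    ∃ t, t ⊆ s ∧ MeasurableSet t ∧ 0 < μ t ∧ μ t < μ s

/-- The almost-compact embedding `X ↪* Y`, for (quasi)norm functionals `NX`, `NY`:
`X ⊂ Y` and for every sequence of measurable sets `Eₙ` whose characteristic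
functions tend to `0` a.e., `sup_{‖f‖_X ≤ 1} ‖f χ_{Eₙ}‖_Y → 0`. -/
def AlmostCompactEmbedding (μ : Measure R) (NX NY : (R → ℝ) → ℝ≥0∞) : Prop :=
  (∀ f : R → ℝ, Measurable f → NX f < ⊤ → NY f < ⊤) ∧
    ∀ E : ℕ → Set R, (∀ n, MeasurableSet (E n)) →
      (∀ᵐ x ∂μ, Filter.Tendsto (fun n => (E n).indicator (fun _ => (1:ℝ)) x)
        Filter.atTop (nhds 0)) →
      Filter.Tendsto
        (fun n => ⨆ f : {f : R → ℝ // Measurable f ∧ NX f ≤ 1},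
          NY ((E n).indicator f.1)) Filter.atTop (nhds 0)

/-- The continuous embedding `X ↪ Y`: there is `C > 0` with `‖f‖_Y ≤ C ‖f‖_X`. -/
def NormEmbedding (μ : Measure R) (NX NY : (R → ℝ) → ℝ≥0∞) : Prop :=
  ∃ C : ℝ, 0 < C ∧ ∀ f : R → ℝ, Measurable f → NY f ≤ ENNReal.ofReal C * NX f

/-!
Put `δ = (r - 1) e`, so that `q / (p - q) = δ` and `(p - 1) δ = e`; the two integrands become
`t ^ (e - 1) (b⁻¹ t) ^ (-δ)` and `B(t) ^ e t ^ (-r e - 1)`. Integrating `y ^ (e - 1) t ^ (-δ - 1)`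
over the region `{(t, y) : y ≤ b t}` in both orders gives
`δ⁻¹ ∫ y ^ (e - 1) (b⁻¹ y) ^ (-δ) dy = e⁻¹ ∫ b(t) ^ e t ^ (-δ - 1) dt`, since up to one point
`{t : y ≤ b t}` is the half-line `(b⁻¹ y, ∞)`. Finally `B t ≤ t b t ≤ B (2 t)`, and the
weight `t ^ (-r e - 1)` is doubling, so `∫ b ^ e t ^ (-δ - 1)` and `∫ B ^ e t ^ (-r e - 1)` are
finite together.
-/

lemma setLIntegral_ofReal_rpow {S : Set ℝ} (hS : MeasurableSet S) (hS0 : S ⊆ Ioi 0) (a : ℝ) :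
    ∫⁻ u in S, ENNReal.ofReal u ^ a = ∫⁻ u in S, ENNReal.ofReal (u ^ a) :=
  setLIntegral_congr_fun hS fun _ hu => ENNReal.ofReal_rpow_of_pos (hS0 hu)

lemma lintegral_Ioi_zero_ofReal_rpow (a : ℝ) :
    ∫⁻ u in Ioi (0:ℝ), ENNReal.ofReal u ^ a = ⊤ := by
  rw [setLIntegral_ofReal_rpow measurableSet_Ioi subset_rfl]
  by_contra h
  refine not_integrableOn_Ioi_rpow a ((lintegral_ofReal_ne_top_iff_integrable ?_ ?_).1 h)
  · exact (measurable_id.pow_const a).aestronglyMeasurable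
  · exact ae_restrict_of_forall_mem measurableSet_Ioi fun u hu => Real.rpow_nonneg (le_of_lt hu) a

lemma lintegral_Ioc_ofReal_rpow_sub_one {e : ℝ} (he : 0 < e) {C : ℝ} (hC : 0 ≤ C) :
    ∫⁻ u in Ioc (0:ℝ) C, ENNReal.ofReal u ^ (e - 1) =
      ENNReal.ofReal C ^ e / ENNReal.ofReal e := by
  rw [setLIntegral_ofReal_rpow measurableSet_Ioc Ioc_subset_Ioi_self,
    ← ofReal_integral_eq_lintegral_ofReal
      (intervalIntegral.intervalIntegrable_rpow' (by linarith)).1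
      (ae_restrict_of_forall_mem measurableSet_Ioc fun u hu => Real.rpow_nonneg hu.1.le _),
    ← intervalIntegral.integral_of_le hC, integral_rpow (Or.inl (by linarith)), sub_add_cancel,
    Real.zero_rpow he.ne', sub_zero, ENNReal.ofReal_div_of_pos he,
    ENNReal.ofReal_rpow_of_nonneg hC he.le]

lemma lintegral_Ioi_ofReal_rpow_neg_sub_one {δ : ℝ} (hδ : 0 < δ) {C : ℝ} (hC : 0 ≤ C) :
    ∫⁻ u in Ioi C, ENNReal.ofReal u ^ (-δ - 1) =
      ENNReal.ofReal C ^ (-δ) / ENNReal.ofReal δ := by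
  rcases hC.eq_or_lt with rfl | hC
  · rw [lintegral_Ioi_zero_ofReal_rpow, ENNReal.ofReal_zero,
      ENNReal.zero_rpow_of_neg (by linarith), ENNReal.top_div_of_ne_top ENNReal.ofReal_ne_top]
  rw [setLIntegral_ofReal_rpow measurableSet_Ioi (Ioi_subset_Ioi hC.le),
    ← ofReal_integral_eq_lintegral_ofReal (integrableOn_Ioi_rpow_of_lt (by linarith) hC)
      (ae_restrict_of_forall_mem measurableSet_Ioi fun u hu =>
        Real.rpow_nonneg (hC.trans hu).le _),
    integral_Ioi_rpow_of_lt (by linarith) hC, sub_add_cancel, neg_div_neg_eq,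
    ENNReal.ofReal_div_of_pos hδ, ENNReal.ofReal_rpow_of_pos hC]

lemma setLIntegral_lt_ofReal_rpow_neg_sub_one {δ : ℝ} (hδ : 0 < δ) (c : ℝ≥0∞) :
    ∫⁻ u in {u : ℝ | c < ENNReal.ofReal u}, ENNReal.ofReal u ^ (-δ - 1) =
      c ^ (-δ) / ENNReal.ofReal δ := by
  rcases eq_or_ne c ⊤ with rfl | hc
  · simp [ENNReal.top_rpow_of_neg (neg_neg_of_pos hδ)]
  have hset : {u : ℝ | c < ENNReal.ofReal u} = Ioi c.toReal :=
    Set.ext fun _ => ENNReal.lt_ofReal_iff_toReal_lt hc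
  rw [hset, lintegral_Ioi_ofReal_rpow_neg_sub_one hδ ENNReal.toReal_nonneg,
    ENNReal.ofReal_toReal hc]

lemma setLIntegral_ofReal_le_rpow_sub_one {e : ℝ} (he : 0 < e) (c : ℝ≥0∞) :
    ∫⁻ u in {u : ℝ | ENNReal.ofReal u ≤ c} ∩ Ioi 0, ENNReal.ofReal u ^ (e - 1) =
      c ^ e / ENNReal.ofReal e := by
  rcases eq_or_ne c ⊤ with rfl | hc
  · simp only [le_top, ofPred_true, univ_inter, lintegral_Ioi_zero_ofReal_rpow,
      ENNReal.top_rpow_of_pos he, ENNReal.top_div_of_ne_top ENNReal.ofReal_ne_top]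
  have hset : {u : ℝ | ENNReal.ofReal u ≤ c} = Iic c.toReal :=
    Set.ext fun _ => ENNReal.ofReal_le_iff_le_toReal hc
  rw [hset, Iic_inter_Ioi, lintegral_Ioc_ofReal_rpow_sub_one he ENNReal.toReal_nonneg,
    ENNReal.ofReal_toReal hc]

lemma leftInvE_le {F : ℝ≥0∞ → ℝ≥0∞} {y τ : ℝ≥0∞} (h : y ≤ F τ) : leftInvE F y ≤ τ :=
  sInf_le h

lemma le_of_leftInvE_lt {F : ℝ≥0∞ → ℝ≥0∞} (hF : Monotone F) {y τ : ℝ≥0∞}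
    (h : leftInvE F y < τ) : y ≤ F τ := by
  obtain ⟨σ, hσ, hστ⟩ := sInf_lt_iff.1 h
  exact hσ.trans (hF hστ.le)

lemma setLIntegral_le_comp_ofReal_rpow_neg_sub_one {F : ℝ≥0∞ → ℝ≥0∞} (hF : Monotone F)
    {δ : ℝ} (hδ : 0 < δ) (y : ℝ≥0∞) :
    ∫⁻ t in {t : ℝ | y ≤ F (ENNReal.ofReal t)} ∩ Ioi 0, ENNReal.ofReal t ^ (-δ - 1) =
      leftInvE F y ^ (-δ) / ENNReal.ofReal δ := by
  set c := leftInvE F y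
  have hlower : {t : ℝ | c < ENNReal.ofReal t} ⊆ {t | y ≤ F (ENNReal.ofReal t)} ∩ Ioi 0 :=
    fun t ht => ⟨le_of_leftInvE_lt hF ht, ENNReal.ofReal_pos.1 (zero_le.trans_lt ht)⟩
  -- the two sets differ at most by the point `c.toReal`
  have hupper : ({t : ℝ | y ≤ F (ENNReal.ofReal t)} ∩ Ioi 0 : Set ℝ) ≤ᵐ[volume]
      ({t : ℝ | c < ENNReal.ofReal t} : Set ℝ) := by
    refine ae_le_set.2 (measure_mono_null (fun t ht => ?_) (measure_singleton c.toReal))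
    obtain ⟨⟨hyt, ht0⟩, hct⟩ := ht
    have hc : c = ENNReal.ofReal t := (leftInvE_le hyt).antisymm (not_lt.1 hct)
    simp [hc, ENNReal.toReal_ofReal (le_of_lt ht0)]
  rw [← setLIntegral_lt_ofReal_rpow_neg_sub_one hδ c]
  exact (lintegral_mono_set' hupper).antisymm (lintegral_mono_set hlower)

lemma measurable_comp_ofReal_of_monotone {F : ℝ≥0∞ → ℝ≥0∞} (hF : Monotone F) :
    Measurable fun t : ℝ => F (ENNReal.ofReal t) :=
  (hF.comp fun _ _ h => ENNReal.ofReal_le_ofReal h).measurable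

lemma lintegral_rpow_mul_leftInvE_rpow_div {b : ℝ≥0∞ → ℝ≥0∞} (hb : Monotone b)
    {e δ : ℝ} (he : 0 < e) (hδ : 0 < δ) :
    (∫⁻ y in Ioi (0:ℝ), ENNReal.ofReal y ^ (e - 1) * leftInvE b (ENNReal.ofReal y) ^ (-δ)) /
        ENNReal.ofReal δ =
      (∫⁻ t in Ioi (0:ℝ), b (ENNReal.ofReal t) ^ e * ENNReal.ofReal t ^ (-δ - 1)) /
        ENNReal.ofReal e := by
  set U : Set (ℝ × ℝ) := {z | ENNReal.ofReal z.2 ≤ b (ENNReal.ofReal z.1)}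
  set G : ℝ × ℝ → ℝ≥0∞ := fun z => ENNReal.ofReal z.2 ^ (e - 1) * ENNReal.ofReal z.1 ^ (-δ - 1)
  have hU : MeasurableSet U :=
    measurableSet_le (ENNReal.measurable_ofReal.comp measurable_snd)
      ((measurable_comp_ofReal_of_monotone hb).comp measurable_fst)
  have hG : Measurable G := by unfold G; fun_prop
  have hy : ∀ y : ℝ, ∫⁻ t in Ioi (0:ℝ), U.indicator G (t, y) =
      ENNReal.ofReal y ^ (e - 1) * leftInvE b (ENNReal.ofReal y) ^ (-δ) / ENNReal.ofReal δ := by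
    intro y
    change ∫⁻ t in Ioi (0:ℝ), {t : ℝ | ENNReal.ofReal y ≤ b (ENNReal.ofReal t)}.indicator
      (fun t => ENNReal.ofReal y ^ (e - 1) * ENNReal.ofReal t ^ (-δ - 1)) t = _
    have hS : MeasurableSet {t : ℝ | ENNReal.ofReal y ≤ b (ENNReal.ofReal t)} :=
      measurableSet_le measurable_const (measurable_comp_ofReal_of_monotone hb)
    simp only [indicator_mul_right]
    rw [lintegral_const_mul _ ((by fun_prop : Measurable fun t : ℝ =>
        ENNReal.ofReal t ^ (-δ - 1)).indicator hS), setLIntegral_indicator hS,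
      setLIntegral_le_comp_ofReal_rpow_neg_sub_one hb hδ, mul_div_assoc]
  have ht : ∀ t ∈ Ioi (0:ℝ), ∫⁻ y in Ioi (0:ℝ), U.indicator G (t, y) =
      b (ENNReal.ofReal t) ^ e * ENNReal.ofReal t ^ (-δ - 1) / ENNReal.ofReal e := by
    intro t ht
    change ∫⁻ y in Ioi (0:ℝ), {y : ℝ | ENNReal.ofReal y ≤ b (ENNReal.ofReal t)}.indicator
      (fun y => ENNReal.ofReal y ^ (e - 1) * ENNReal.ofReal t ^ (-δ - 1)) y = _
    have hS : MeasurableSet {y : ℝ | ENNReal.ofReal y ≤ b (ENNReal.ofReal t)} :=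
      measurableSet_le ENNReal.measurable_ofReal measurable_const
    simp only [indicator_mul_left]
    rw [lintegral_mul_const' _ _ (ENNReal.rpow_ne_top_of_ne_zero
        (ENNReal.ofReal_pos.2 ht).ne' ENNReal.ofReal_ne_top), setLIntegral_indicator hS,
      setLIntegral_ofReal_le_rpow_sub_one he, div_eq_mul_inv, div_eq_mul_inv, mul_right_comm]
  calc _ = ∫⁻ y in Ioi (0:ℝ), ∫⁻ t in Ioi (0:ℝ), U.indicator G (t, y) := by
        simp only [hy, div_eq_mul_inv]
        rw [lintegral_mul_const' _ _ (ENNReal.inv_ne_top.2 (ENNReal.ofReal_pos.2 hδ).ne')]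
    _ = ∫⁻ t in Ioi (0:ℝ), ∫⁻ y in Ioi (0:ℝ), U.indicator G (t, y) :=
        lintegral_lintegral_swap ((hG.indicator hU).comp measurable_swap).aemeasurable
    _ = _ := by
        rw [setLIntegral_congr_fun measurableSet_Ioi ht]
        simp only [div_eq_mul_inv]
        rw [lintegral_mul_const' _ _ (ENNReal.inv_ne_top.2 (ENNReal.ofReal_pos.2 he).ne')]

lemma lintegral_Ioi_zero_comp_const_mul {φ : ℝ → ℝ≥0∞} (hφ : Measurable φ) {c : ℝ} (hc : 0 < c) :
    ∫⁻ t in Ioi (0:ℝ), φ (c * t) = ENNReal.ofReal c⁻¹ * ∫⁻ t in Ioi (0:ℝ), φ t := by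
  have hpre : (c * ·) ⁻¹' Ioi (0:ℝ) = Ioi 0 := by
    rw [preimage_const_mul_Ioi₀ _ hc, zero_div]
  rw [← lintegral_map hφ (measurable_const_mul c), ← hpre,
    ← Measure.restrict_map (measurable_const_mul c) measurableSet_Ioi,
    Real.map_volume_mul_left hc.ne', Measure.restrict_smul, lintegral_smul_measure, hpre,
    abs_of_pos (inv_pos.2 hc), smul_eq_mul]

lemma IsYoungDerivative.toFun_le_mul {B : YoungFunction} {b : ℝ≥0∞ → ℝ≥0∞}
    (hb : IsYoungDerivative B b) {t : ℝ} (ht : 0 ≤ t) :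
    B.toFun (ENNReal.ofReal t) ≤ ENNReal.ofReal t * b (ENNReal.ofReal t) := by
  rw [hb.2.2.2 t ht]
  calc ∫⁻ u in Ioc (0:ℝ) t, b (ENNReal.ofReal u)
      ≤ ∫⁻ _ in Ioc (0:ℝ) t, b (ENNReal.ofReal t) :=
        setLIntegral_mono measurable_const fun u hu => hb.1 (ENNReal.ofReal_le_ofReal hu.2)
    _ = ENNReal.ofReal t * b (ENNReal.ofReal t) := by
        rw [setLIntegral_const, Real.volume_Ioc, sub_zero, mul_comm]

lemma IsYoungDerivative.mul_le_toFun_two_mul {B : YoungFunction} {b : ℝ≥0∞ → ℝ≥0∞}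
    (hb : IsYoungDerivative B b) {t : ℝ} (ht : 0 ≤ t) :
    ENNReal.ofReal t * b (ENNReal.ofReal t) ≤ B.toFun (ENNReal.ofReal (2 * t)) := by
  rw [hb.2.2.2 (2 * t) (by linarith)]
  calc ENNReal.ofReal t * b (ENNReal.ofReal t)
      = ∫⁻ _ in Ioc t (2 * t), b (ENNReal.ofReal t) := by
        rw [setLIntegral_const, Real.volume_Ioc, two_mul, add_sub_cancel_right, mul_comm]
    _ ≤ ∫⁻ u in Ioc t (2 * t), b (ENNReal.ofReal u) :=
        setLIntegral_mono (measurable_comp_ofReal_of_monotone hb.1)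
          fun u hu => hb.1 (ENNReal.ofReal_le_ofReal hu.1.le)
    _ ≤ ∫⁻ u in Ioc (0:ℝ) (2 * t), b (ENNReal.ofReal u) :=
        lintegral_mono_set (Ioc_subset_Ioc_left ht)

lemma IsYoungDerivative.lintegral_rpow_mul_rpow_lt_top_iff {B : YoungFunction}
    {b : ℝ≥0∞ → ℝ≥0∞} (hb : IsYoungDerivative B b) {e : ℝ} (he : 0 < e) (a : ℝ) :
    (∫⁻ t in Ioi (0:ℝ), b (ENNReal.ofReal t) ^ e * ENNReal.ofReal t ^ a) < ⊤ ↔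
      (∫⁻ t in Ioi (0:ℝ), B.toFun (ENNReal.ofReal t) ^ e * ENNReal.ofReal t ^ (a - e)) < ⊤ := by
  have hsplit : ∀ t : ℝ, 0 < t → ∀ x : ℝ≥0∞,
      x ^ e * ENNReal.ofReal t ^ a = (ENNReal.ofReal t * x) ^ e * ENNReal.ofReal t ^ (a - e) := by
    intro t ht x
    rw [ENNReal.mul_rpow_of_nonneg _ _ he.le, mul_comm (ENNReal.ofReal t ^ e), mul_assoc,
      ← ENNReal.rpow_add _ _ (ENNReal.ofReal_pos.2 ht).ne' ENNReal.ofReal_ne_top,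
      add_sub_cancel]
  have hB : Measurable fun t : ℝ => B.toFun (ENNReal.ofReal t) ^ e * ENNReal.ofReal t ^ (a - e) :=
    ((measurable_comp_ofReal_of_monotone B.mono).pow_const e).mul (by fun_prop)
  have h2 : ENNReal.ofReal 2 ^ (e - a) ≠ ⊤ :=
    ENNReal.rpow_ne_top_of_ne_zero (by simp) ENNReal.ofReal_ne_top
  constructor
  · refine lt_of_le_of_lt (setLIntegral_mono' measurableSet_Ioi fun t ht => ?_)
    rw [hsplit t ht]
    gcongr
    exact hb.toFun_le_mul (le_of_lt ht)
  · intro h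
    calc _ ≤ ∫⁻ t in Ioi (0:ℝ), ENNReal.ofReal 2 ^ (e - a) *
          (B.toFun (ENNReal.ofReal (2 * t)) ^ e * ENNReal.ofReal (2 * t) ^ (a - e)) := by
          refine setLIntegral_mono' measurableSet_Ioi fun t ht => ?_
          have h2t : ENNReal.ofReal t ^ (a - e) =
              ENNReal.ofReal 2 ^ (e - a) * ENNReal.ofReal (2 * t) ^ (a - e) := by
            rw [ENNReal.ofReal_mul zero_le_two, ENNReal.mul_rpow_of_ne_zero (by simp)
              (ENNReal.ofReal_pos.2 ht).ne', ← mul_assoc,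
              ← ENNReal.rpow_add _ _ (by simp) (by simp),
              sub_add_sub_cancel, sub_self, ENNReal.rpow_zero, one_mul]
          rw [hsplit t ht, h2t, mul_left_comm]
          gcongr
          exact hb.mul_le_toFun_two_mul (le_of_lt ht)
      _ = ENNReal.ofReal 2 ^ (e - a) * (ENNReal.ofReal 2⁻¹ *
          ∫⁻ t in Ioi (0:ℝ), B.toFun (ENNReal.ofReal t) ^ e * ENNReal.ofReal t ^ (a - e)) := by
          rw [lintegral_const_mul' _ _ h2]
          exact congrArg _ (lintegral_Ioi_zero_comp_const_mul hB two_pos)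
      _ < ⊤ := ENNReal.mul_lt_top h2.lt_top (ENNReal.mul_lt_top ENNReal.ofReal_lt_top h)

lemma exponent_pos_and_div_sub_eq_sub_one_mul {r : ℝ} {s : ℝ≥0∞} (hr : 1 < r)
    (hrs : ENNReal.ofReal r < s) {p q e : ℝ}
    (hp : p = r / (r - 1)) (hq : q = if s = ⊤ then 1 else s.toReal / (s.toReal - 1))
    (he : e = if s = ⊤ then 1 else s.toReal / (s.toReal - r)) :
    0 < e ∧ q / (p - q) = (r - 1) * e := by
  have hr1 : r - 1 ≠ 0 := by linarith
  rcases eq_or_ne s ⊤ with rfl | hs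
  · simp only [if_true] at hq he
    subst hp hq he
    refine ⟨one_pos, ?_⟩
    field_simp
    ring
  · simp only [hs, if_false] at hq he
    have hrs' : r < s.toReal := (ENNReal.ofReal_lt_iff_lt_toReal (by linarith) hs).1 hrs
    have hs1 : s.toReal - 1 ≠ 0 := by linarith
    have hsr : s.toReal - r ≠ 0 := by linarith
    subst hp hq he
    refine ⟨div_pos (by linarith) (by linarith), ?_⟩
    rw [div_sub_div _ _ hr1 hs1,
      show r * (s.toReal - 1) - (r - 1) * s.toReal = s.toReal - r by ring]
    field_simp

lemma rpow_div_rpow_div_self {x : ℝ≥0∞} (hx0 : x ≠ 0) (hxt : x ≠ ⊤) (y : ℝ≥0∞) {a k : ℝ}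
    (hk : 0 ≤ k) : (x ^ a / y) ^ k / x = x ^ (a * k - 1) * y ^ (-k) := by
  rw [ENNReal.div_rpow_of_nonneg _ _ hk, ← ENNReal.rpow_mul, ENNReal.rpow_sub _ _ hx0 hxt,
    ENNReal.rpow_one, ENNReal.rpow_neg, div_eq_mul_inv, div_eq_mul_inv, div_eq_mul_inv,
    mul_right_comm]

lemma div_rpow_rpow_div_self {x : ℝ≥0∞} (hx0 : x ≠ 0) (hxt : x ≠ ⊤) (y : ℝ≥0∞) {r e : ℝ}
    (he : 0 ≤ e) : (y / x ^ r) ^ e / x = y ^ e * x ^ (-(r * e) - 1) := by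
  rw [ENNReal.div_rpow_of_nonneg _ _ he, ← ENNReal.rpow_mul, ENNReal.rpow_sub _ _ hx0 hxt,
    ENNReal.rpow_one, ENNReal.rpow_neg, div_eq_mul_inv, div_eq_mul_inv, div_eq_mul_inv,
    mul_assoc]

lemma ENNReal.div_lt_top_iff_of_ne {x c : ℝ≥0∞} (hc0 : c ≠ 0) (hct : c ≠ ⊤) :
    x / c < ⊤ ↔ x < ⊤ := by
  simp [lt_top_iff_ne_top, ENNReal.div_eq_top, hc0, hct]

/-- Let `B` be a Young function with right-continuous derivative `b`,
`1 < r < s ≤ ∞`, `p = r/(r-1)`, `q = s/(s-1)` (`q = 1` when `s = ∞`). Then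
`∫₀^∞ (t^{p-1}/b⁻¹(t))^{q/(p-q)} dt/t < ∞` iff `∫₀^∞ (B(t)/t^r)^{s/(s-r)} dt/t < ∞`,
the exponent `s/(s-r)` being interpreted as `1` when `s = ∞`. -/
theorem dual_integral_conditions_equivalent
    (B : YoungFunction) (b : ℝ≥0∞ → ℝ≥0∞) (hb : IsYoungDerivative B b)
    (r : ℝ) (s : ℝ≥0∞) (hr : 1 < r) (hrs : ENNReal.ofReal r < s)
    (p q e : ℝ) (hp : p = r / (r - 1))
    (hq : q = if s = ⊤ then 1 else s.toReal / (s.toReal - 1))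
    (he : e = if s = ⊤ then 1 else s.toReal / (s.toReal - r)) :
    ((∫⁻ t in Set.Ioi (0:ℝ),
        (ENNReal.ofReal t ^ (p - 1) / leftInvE b (ENNReal.ofReal t)) ^ (q / (p - q))
          / ENNReal.ofReal t) < ⊤ ↔
      (∫⁻ t in Set.Ioi (0:ℝ),
        (B.toFun (ENNReal.ofReal t) / ENNReal.ofReal t ^ r) ^ e
          / ENNReal.ofReal t) < ⊤) := by
  obtain ⟨he0, hpq⟩ := exponent_pos_and_div_sub_eq_sub_one_mul hr hrs hp hq he
  have hδ : 0 < (r - 1) * e := mul_pos (by linarith) he0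
  have hpδ : (p - 1) * ((r - 1) * e) - 1 = e - 1 := by
    have hr1 : r - 1 ≠ 0 := by linarith
    rw [hp]
    field_simp
    ring
  have hx0 : ∀ t ∈ Ioi (0:ℝ), ENNReal.ofReal t ≠ 0 := fun t ht => (ENNReal.ofReal_pos.2 ht).ne'
  rw [hpq, setLIntegral_congr_fun measurableSet_Ioi fun t ht =>
      rpow_div_rpow_div_self (hx0 t ht) ENNReal.ofReal_ne_top _ hδ.le,
    setLIntegral_congr_fun measurableSet_Ioi fun t ht =>
      div_rpow_rpow_div_self (hx0 t ht) ENNReal.ofReal_ne_top _ he0.le, hpδ,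
    ← ENNReal.div_lt_top_iff_of_ne (ENNReal.ofReal_pos.2 hδ).ne' ENNReal.ofReal_ne_top,
    lintegral_rpow_mul_leftInvE_rpow_div hb.1 he0 hδ,
    ENNReal.div_lt_top_iff_of_ne (ENNReal.ofReal_pos.2 he0).ne' ENNReal.ofReal_ne_top,
    hb.lintegral_rpow_mul_rpow_lt_top_iff he0, show -((r - 1) * e) - 1 - e = -(r * e) - 1 by ring]
end
end

section
/- Let B be a Young function with Young conjugate B̃, and let p ∈ (1,∞) with conjugate exponent p' = p/(p−1). Then lim_{t→∞} B̃(t)/t^{p'} = ∞ if and only if lim_{t→∞} t^p / B(t) = ∞. -/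
open MeasureTheory Filter Set ENNReal

noncomputable section

variable {R : Type*} [MeasurableSpace R]

open Topology

/-!
Write `q = p/(p-1)`, so that `(p-1)(q-1) = 1`. Only two links between `B` and `B̃` are needed:
Young's inequality `u s - B(u) ≤ B̃(s)`, and `B̃(B(t)/t) ≤ B(t)`, which holds because convexity
makes the slope `B(u)/u` non-decreasing.

If `c^p B(u) ≤ u^p` for large `u`, Young's inequality at `u = c s^(q-1)` gives
`B̃(s) ≥ (c - 1) s^q`. Conversely, if `M^(q-1) s^q ≤ B̃(s)` for large `s`, then at a point `t`
whose slope `s = B(t)/t` is large, `M^(q-1) s^q ≤ B̃(s) ≤ B(t) = s t`, i.e. `(M s)^(q-1) ≤ t`,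
i.e. `M s ≤ t^(p-1)`; hence `M B(t) ≤ t^p`. At points of small slope this bound is clear for
large `t`.
-/

namespace YoungFunction

variable (B : YoungFunction)

theorem map_mul_le {c : ℝ≥0∞} (hc : c ≤ 1) (u : ℝ≥0∞) : B.toFun (c * u) ≤ c * B.toFun u := by
  simpa [B.map_zero] using B.convex' u 0 c hc

theorem div_le_div_of_le {t u : ℝ≥0∞} (ht : t ≠ 0) (htu : t ≤ u) (hu : u ≠ ⊤) :
    B.toFun t / t ≤ B.toFun u / u := by
  have hu0 : u ≠ 0 := ne_bot_of_le_ne_bot ht htu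
  have htop : t ≠ ⊤ := ne_top_of_le_ne_top hu htu
  have hconv : B.toFun t ≤ t / u * B.toFun u := by
    simpa [ENNReal.div_mul_cancel hu0 hu] using
      B.map_mul_le ((ENNReal.div_le_iff hu0 hu).2 (by simpa using htu)) u
  rw [ENNReal.div_le_iff ht htop]
  calc B.toFun t ≤ t / u * B.toFun u := hconv
    _ = B.toFun u / u * t := by rw [div_eq_mul_inv, div_eq_mul_inv]; ring

end YoungFunction

section Conjugate

variable {B : YoungFunction}

theorem mul_sub_le_youngConj (u s : ℝ≥0∞) : u * s - B.toFun u ≤ youngConj B s :=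
  le_iSup (fun u => u * s - B.toFun u) u

theorem youngConj_le_mul_of_map_eq_top {t : ℝ≥0∞} (ht : B.toFun t = ⊤) (s : ℝ≥0∞) :
    youngConj B s ≤ t * s := by
  refine iSup_le fun u => ?_
  rcases le_or_gt u t with hut | htu
  · exact tsub_le_self.trans (by gcongr)
  · simp [top_le_iff.1 (ht ▸ B.mono htu.le)]

theorem youngConj_div_self_le {t : ℝ≥0∞} (ht : t ≠ 0) (htop : t ≠ ⊤) :
    youngConj B (B.toFun t / t) ≤ B.toFun t := by
  refine iSup_le fun u => ?_
  rcases le_or_gt u t with hut | htu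
  · calc u * (B.toFun t / t) - B.toFun u ≤ t * (B.toFun t / t) := tsub_le_self.trans (by gcongr)
      _ = B.toFun t := ENNReal.mul_div_cancel ht htop
  rcases eq_or_ne u ⊤ with rfl | hu
  · simp [B.map_top]
  refine (tsub_eq_zero_of_le ?_).trans_le zero_le
  calc u * (B.toFun t / t) ≤ u * (B.toFun u / u) :=
        mul_le_mul_right (B.div_le_div_of_le ht htu.le hu) u
    _ = B.toFun u := ENNReal.mul_div_cancel (ne_bot_of_gt htu) hu

end Conjugate

section Limits

variable {α : Type*} {l : Filter α}

theorem ENNReal.tendsto_nhds_top_iff_ofReal_le {F : α → ℝ≥0∞} :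
    Tendsto F l (𝓝 ⊤) ↔ ∀ M : ℝ, 0 ≤ M → ∀ᶠ x in l, ENNReal.ofReal M ≤ F x := by
  rw [ENNReal.tendsto_nhds_top_iff_nnreal]
  refine ⟨fun h M _ => (h M.toNNReal).mono fun x hx => hx.le, fun h M => ?_⟩
  filter_upwards [h (M + 1) (by positivity)] with x hx
  refine lt_of_lt_of_le ?_ hx
  rw [ENNReal.ofReal_add M.coe_nonneg zero_le_one, ENNReal.ofReal_coe_nnreal, ENNReal.ofReal_one]
  exact ENNReal.lt_add_right ENNReal.coe_ne_top one_ne_zero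

theorem ENNReal.tendsto_div_nhds_top_iff {f g : α → ℝ≥0∞}
    (h : ∀ᶠ x in l, (g x ≠ 0 ∨ f x ≠ 0) ∧ (g x ≠ ⊤ ∨ f x ≠ ⊤)) :
    Tendsto (fun x => f x / g x) l (𝓝 ⊤) ↔
      ∀ M : ℝ, 0 ≤ M → ∀ᶠ x in l, ENNReal.ofReal M * g x ≤ f x := by
  rw [ENNReal.tendsto_nhds_top_iff_ofReal_le]
  refine forall₂_congr fun M _ => eventually_congr ?_
  exact h.mono fun x hx => ENNReal.le_div_iff_mul_le hx.1 hx.2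

theorem eventually_ofReal_rpow_ne_zero_and_ne_top (p : ℝ) :
    ∀ᶠ t in atTop, ENNReal.ofReal t ^ p ≠ 0 ∧ ENNReal.ofReal t ^ p ≠ ⊤ := by
  filter_upwards [eventually_gt_atTop 0] with t ht
  simp [ENNReal.ofReal_rpow_of_pos ht, Real.rpow_pos_of_pos ht]

theorem tendsto_rpow_div_nhds_top_iff {F : ℝ → ℝ≥0∞} {p : ℝ} :
    Tendsto (fun t => ENNReal.ofReal t ^ p / F t) atTop (𝓝 ⊤) ↔
      ∀ M : ℝ, 0 ≤ M → ∀ᶠ t in atTop, ENNReal.ofReal M * F t ≤ ENNReal.ofReal t ^ p :=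
  ENNReal.tendsto_div_nhds_top_iff <|
    (eventually_ofReal_rpow_ne_zero_and_ne_top p).mono fun _ ht => ⟨Or.inr ht.1, Or.inr ht.2⟩

theorem tendsto_div_rpow_nhds_top_iff {G : ℝ → ℝ≥0∞} {q : ℝ} :
    Tendsto (fun s => G s / ENNReal.ofReal s ^ q) atTop (𝓝 ⊤) ↔
      ∀ M : ℝ, 0 ≤ M → ∀ᶠ s in atTop, ENNReal.ofReal M * ENNReal.ofReal s ^ q ≤ G s :=
  ENNReal.tendsto_div_nhds_top_iff <|
    (eventually_ofReal_rpow_ne_zero_and_ne_top q).mono fun _ hs => ⟨Or.inl hs.1, Or.inl hs.2⟩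

end Limits

theorem Real.HolderConjugate.rpow_sub_one_le_iff {p q x t : ℝ} (hpq : p.HolderConjugate q)
    (hx : 0 ≤ x) (ht : 0 ≤ t) : x ^ (q - 1) ≤ t ↔ x ≤ t ^ (p - 1) := by
  have hq : q - 1 = (p - 1)⁻¹ :=
    eq_inv_of_mul_eq_one_right (by linear_combination hpq.sub_one_mul_conj)
  rw [hq]
  exact Real.rpow_inv_le_iff_of_pos hx ht hpq.sub_one_pos

section Growth

variable {B : YoungFunction} {p q : ℝ}

theorem tendsto_youngConj_div_rpow_of_tendsto_rpow_div (hpq : p.HolderConjugate q)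
    (h : Tendsto (fun t => ENNReal.ofReal t ^ p / B.toFun (ENNReal.ofReal t)) atTop (𝓝 ⊤)) :
    Tendsto (fun s => youngConj B (ENNReal.ofReal s) / ENNReal.ofReal s ^ q) atTop (𝓝 ⊤) := by
  rw [tendsto_rpow_div_nhds_top_iff] at h
  rw [tendsto_div_rpow_nhds_top_iff]
  intro M hM
  set c := M + 1 with hc_def
  have hc : 0 < c := by positivity
  have hu : Tendsto (fun s : ℝ => c * s ^ (q - 1)) atTop atTop :=
    (tendsto_rpow_atTop (sub_pos.2 hpq.symm.lt)).const_mul_atTop hc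
  filter_upwards [hu.eventually (h (c ^ p) (by positivity)), eventually_gt_atTop 0]
    with s hB hs
  set u := c * s ^ (q - 1)
  have hu0 : 0 < u := by positivity
  have hBu : B.toFun (ENNReal.ofReal u) ≤ ENNReal.ofReal (s ^ q) := by
    have hup : ENNReal.ofReal u ^ p = ENNReal.ofReal (c ^ p) * ENNReal.ofReal (s ^ q) := by
      rw [ENNReal.ofReal_rpow_of_pos hu0, ← ENNReal.ofReal_mul (by positivity),
        Real.mul_rpow hc.le (by positivity), ← Real.rpow_mul hs.le, hpq.symm.sub_one_mul_conj]
    rwa [hup, ENNReal.mul_le_mul_iff_right (by simp; positivity) ENNReal.ofReal_ne_top] at hB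
  have hus : u * s = c * s ^ q := by
    rw [mul_assoc, ← Real.rpow_add_one hs.ne', sub_add_cancel]
  calc ENNReal.ofReal M * ENNReal.ofReal s ^ q = ENNReal.ofReal (u * s - s ^ q) := by
        rw [hus, ENNReal.ofReal_rpow_of_pos hs, ← ENNReal.ofReal_mul hM, hc_def]
        congr 1
        ring
    _ = ENNReal.ofReal u * ENNReal.ofReal s - ENNReal.ofReal (s ^ q) := by
        rw [ENNReal.ofReal_sub _ (by positivity), ENNReal.ofReal_mul hu0.le]
    _ ≤ ENNReal.ofReal u * ENNReal.ofReal s - B.toFun (ENNReal.ofReal u) := by gcongr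
    _ ≤ youngConj B (ENNReal.ofReal s) := mul_sub_le_youngConj _ _

theorem YoungFunction.map_ne_top_of_tendsto_youngConj_div_rpow (hq : 1 ≤ q)
    (h : Tendsto (fun s => youngConj B (ENNReal.ofReal s) / ENNReal.ofReal s ^ q) atTop (𝓝 ⊤))
    {t : ℝ≥0∞} (ht : t ≠ ⊤) : B.toFun t ≠ ⊤ := by
  intro hBt
  rw [tendsto_div_rpow_nhds_top_iff] at h
  obtain ⟨s, hs, hs1⟩ := ((h (t.toReal + 1) (by positivity)).and (eventually_ge_atTop 1)).exists
  have hs0 : 0 < s := by linarith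
  have hle : ENNReal.ofReal ((t.toReal + 1) * s ^ q) ≤ ENNReal.ofReal (t.toReal * s) :=
    calc ENNReal.ofReal ((t.toReal + 1) * s ^ q)
        = ENNReal.ofReal (t.toReal + 1) * ENNReal.ofReal s ^ q := by
          rw [ENNReal.ofReal_mul (by positivity), ENNReal.ofReal_rpow_of_pos hs0]
      _ ≤ youngConj B (ENNReal.ofReal s) := hs
      _ ≤ t * ENNReal.ofReal s := youngConj_le_mul_of_map_eq_top hBt _
      _ = ENNReal.ofReal (t.toReal * s) := by
          rw [ENNReal.ofReal_mul ENNReal.toReal_nonneg, ENNReal.ofReal_toReal ht]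
  rw [ENNReal.ofReal_le_ofReal_iff (by positivity)] at hle
  nlinarith [Real.self_le_rpow_of_one_le hs1 hq, t.toReal_nonneg]

theorem mul_le_rpow_sub_one_of_map_eq_mul (hpq : p.HolderConjugate q) {M s t : ℝ} (hM : 0 ≤ M)
    (hs : 0 < s) (ht : 0 < t) (hBt : B.toFun (ENNReal.ofReal t) = ENNReal.ofReal (s * t))
    (hconj : ENNReal.ofReal (M ^ (q - 1)) * ENNReal.ofReal s ^ q ≤ youngConj B (ENNReal.ofReal s)) :
    M * s ≤ t ^ (p - 1) := by
  have hslope : B.toFun (ENNReal.ofReal t) / ENNReal.ofReal t = ENNReal.ofReal s := by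
    rw [hBt, ← ENNReal.ofReal_div_of_pos ht, mul_div_cancel_right₀ _ ht.ne']
  have hsq : ENNReal.ofReal (M ^ (q - 1) * s ^ q) ≤ ENNReal.ofReal (s * t) :=
    calc ENNReal.ofReal (M ^ (q - 1) * s ^ q)
        = ENNReal.ofReal (M ^ (q - 1)) * ENNReal.ofReal s ^ q := by
          rw [ENNReal.ofReal_mul (by positivity), ENNReal.ofReal_rpow_of_pos hs]
      _ ≤ youngConj B (B.toFun (ENNReal.ofReal t) / ENNReal.ofReal t) := by rwa [hslope]
      _ ≤ ENNReal.ofReal (s * t) := by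
          rw [← hBt]
          exact youngConj_div_self_le (by simpa using ht) ENNReal.ofReal_ne_top
  rw [ENNReal.ofReal_le_ofReal_iff (by positivity)] at hsq
  rw [← hpq.rpow_sub_one_le_iff (by positivity) ht.le]
  refine le_of_mul_le_mul_right ?_ hs
  rwa [Real.mul_rpow hM hs.le, mul_assoc, ← Real.rpow_add_one hs.ne', sub_add_cancel, mul_comm t]

theorem tendsto_rpow_div_of_tendsto_youngConj_div_rpow (hpq : p.HolderConjugate q)
    (h : Tendsto (fun s => youngConj B (ENNReal.ofReal s) / ENNReal.ofReal s ^ q) atTop (𝓝 ⊤)) :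
    Tendsto (fun t => ENNReal.ofReal t ^ p / B.toFun (ENNReal.ofReal t)) atTop (𝓝 ⊤) := by
  have hfin (t : ℝ) : B.toFun (ENNReal.ofReal t) ≠ ⊤ :=
    B.map_ne_top_of_tendsto_youngConj_div_rpow hpq.symm.lt.le h ENNReal.ofReal_ne_top
  rw [tendsto_div_rpow_nhds_top_iff] at h
  rw [tendsto_rpow_div_nhds_top_iff]
  intro M hM
  obtain ⟨S, hS⟩ :=
    eventually_atTop.1 ((h (M ^ (q - 1)) (by positivity)).and (eventually_gt_atTop 0))
  filter_upwards [(tendsto_rpow_atTop hpq.sub_one_pos).eventually_ge_atTop (M * max S 0),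
    eventually_gt_atTop 0] with t hMt ht
  set s := (B.toFun (ENNReal.ofReal t)).toReal / t
  have hBt : B.toFun (ENNReal.ofReal t) = ENNReal.ofReal (s * t) := by
    rw [div_mul_cancel₀ _ ht.ne', ENNReal.ofReal_toReal (hfin t)]
  have hslope : M * s ≤ t ^ (p - 1) := by
    rcases le_or_gt S s with hSs | hsS
    · obtain ⟨hconj, hs⟩ := hS s hSs
      exact mul_le_rpow_sub_one_of_map_eq_mul hpq hM hs ht hBt hconj
    · calc M * s ≤ M * max S 0 := by gcongr; exact hsS.le.trans (le_max_left _ _)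
        _ ≤ t ^ (p - 1) := hMt
  calc ENNReal.ofReal M * B.toFun (ENNReal.ofReal t) = ENNReal.ofReal (M * s * t) := by
        rw [hBt, ← ENNReal.ofReal_mul hM, mul_assoc]
    _ ≤ ENNReal.ofReal (t ^ (p - 1) * t) := by gcongr
    _ = ENNReal.ofReal t ^ p := by
        rw [ENNReal.ofReal_rpow_of_pos ht, Real.rpow_sub_one ht.ne', div_mul_cancel₀ _ ht.ne']

end Growth

/-- For a Young function `B` with Young conjugate `B̃` and
`p ∈ (1,∞)` with conjugate exponent `p' = p/(p-1)`:
`lim_{t→∞} B̃(t)/t^{p'} = ∞` iff `lim_{t→∞} t^p/B(t) = ∞`. -/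
theorem conjugate_limit_iff
    (B : YoungFunction) (p : ℝ) (hp : 1 < p) :
    Filter.Tendsto
        (fun t : ℝ => youngConj B (ENNReal.ofReal t) / ENNReal.ofReal t ^ (p / (p - 1)))
        Filter.atTop (nhds ⊤) ↔
      Filter.Tendsto (fun t : ℝ => ENNReal.ofReal t ^ p / B.toFun (ENNReal.ofReal t))
        Filter.atTop (nhds ⊤) := by
  have hpq : p.HolderConjugate (p / (p - 1)) :=
    (Real.holderConjugate_iff_eq_conjExponent hp).2 rfl
  exact ⟨tendsto_rpow_div_of_tendsto_youngConj_div_rpow hpq,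
    tendsto_youngConj_div_rpow_of_tendsto_rpow_div hpq⟩
end
end
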